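/- In the left-symmetric algebra A_{2,α} on ℂ⁴ (basis x, y, h, z), the element e = α·h + z is a right identity: a·e = a for every a; moreover it is the unique right identity. -/
import Mathlib


/-- Left-multiplication matrices of the family `A_{2,α}` on `ℂ⁴` with basis
`(x, y, h, z)` (columns indexed by the basis). -/
noncomputable def L2 (α : ℂ) : Fin 4 → Matrix (Fin 4) (Fin 4) ℂ :=
  ![!![0, 0, -1, 1 + α; 0, 0, 0, 0; 0, (1 + α)/2, 0, 0; 0, 1/2, 0, 0],
    !![0, 0, 0, 0; 0, 0, 1, 1 - α; (α - 1)/2, 0, 0, 0; 1/2, 0, 0, 0],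
    !![1, 0, 0, 0; 0, -1, 0, 0; 0, 0, α, 1 - α^2; 0, 0, 1, -α],
    !![1 + α, 0, 0, 0; 0, 1 - α, 0, 0; 0, 0, 1 - α^2, α^3 - α; 0, 0, -α, 1 + α^2]]

/-- The bilinear product of `A_{2,α}` on `ℂ⁴` determined by `L2 α`. -/
noncomputable def mul2 (α : ℂ) (a b : Fin 4 → ℂ) : Fin 4 → ℂ :=
  ∑ i : Fin 4, a i • (L2 α i).mulVec b

/-- In `A_{2,α}`, the element `e = α·h + z = (0,0,α,1)` is the unique
right identity. -/
theorem A2_right_identity (α : ℂ) :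
    (∀ a : Fin 4 → ℂ, mul2 α a ![0, 0, α, 1] = a) ∧
    (∀ e : Fin 4 → ℂ, (∀ a : Fin 4 → ℂ, mul2 α a e = a) → e = ![0, 0, α, 1]) := by
  constructor
  · intro a
    funext j
    fin_cases j <;>
      simp [mul2, L2, Matrix.mulVec, dotProduct, Fin.sum_univ_four, Matrix.vecHead, Matrix.vecTail] <;> ring
  · intro e he
    have h := he ![0, 0, 1, 0]
    have h0 := congrFun h 0
    have h1 := congrFun h 1
    have h2 := congrFun h 2
    have h3 := congrFun h 3
    simp [mul2, L2, Matrix.mulVec, dotProduct, Fin.sum_univ_four, Matrix.vecHead, Matrix.vecTail] at h0 h1 h2 h3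
    funext j
    fin_cases j <;> simp
    · exact h0
    · exact h1
    · -- e2 = α : from h3 : e2 - α e3 = 0 and h2 : α e2 + (1-α²) e3 = 1
      -- e2 = α e3, so α² e3 + (1-α²) e3 = 1 → e3 = 1, e2 = α
      have he3 : e 3 = 1 := by linear_combination h2 - α * h3
      linear_combination h3 + α * he3
    · linear_combination h2 - α * h3
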